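/- Let ρ = Σ_{j=1}^{n} (n−j+1)ε_j be the half-sum of positive roots of C_n, fix 2 ≤ i ≤ n−1, let λ_i = ε_1 + ⋯ + ε_i and s = n−i+1. Then the sequence (ε_{i−1}−ε_i, ε_i−ε_n) links −2ε_n − sλ_i + ρ to (−ε_{i−1}−ε_i) − sλ_i + ρ: setting δ = −2ε_n − sλ_i + ρ one has ⟨δ, (ε_{i−1}−ε_i)^∨⟩ ∈ ℤ_{≥0}; with δ₁ = s_{ε_{i−1}−ε_i}(δ) one has ⟨δ₁, (ε_i−ε_n)^∨⟩ ∈ ℤ_{≥0}; and s_{ε_i−ε_n}(δ₁) = (−ε_{i−1}−ε_i) − sλ_i + ρ. -/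

import Mathlib

/-! The weight `δ = ρ - sλ_i - 2ε_n` has coordinates `1, 0, -1` at positions `i-1, i, n`, so it
drops by exactly one along each of the short roots `ε_{i-1} - ε_i` and `ε_i - ε_n`. For a short
root `ε_a - ε_b` the pairing is just `v_a - v_b`; the first reflection therefore subtracts the root
once, which widens the gap between positions `i` and `n` to `2`, and the second reflection subtracts
`2(ε_i - ε_n)`. The result `δ - ε_{i-1} - ε_i + 2ε_n` is the target weight. -/

noncomputable section

/-- The standard basis vector `ε_j` of `ℝ^n`. -/
def eps (n : ℕ) (j : Fin n) : Fin n → ℝ := Pi.single j 1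

/-- The standard inner product on `ℝ^n`. -/
def ip {n : ℕ} (v w : Fin n → ℝ) : ℝ := ∑ t, v t * w t

/-- The pairing `⟨v, β^∨⟩ = 2⟨v, β⟩/⟨β, β⟩`. -/
def pairing {n : ℕ} (v β : Fin n → ℝ) : ℝ := 2 * ip v β / ip β β

/-- The reflection `s_β(v) = v - ⟨v, β^∨⟩ β`. -/
def wrefl {n : ℕ} (β v : Fin n → ℝ) : Fin n → ℝ := v - pairing v β • β

/-- `ρ = Σ_{j=1}^{n} (n-j+1) ε_j`, the half sum of positive roots of `C_n` (0-based indices). -/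
def rhoC (n : ℕ) : Fin n → ℝ := fun t => (n : ℝ) - (t : ℕ)

/-- `λ_i = ε_1 + ⋯ + ε_i`. -/
def lamC (n i : ℕ) : Fin n → ℝ :=
  ∑ j ∈ Finset.univ.filter (fun j : Fin n => (j : ℕ) < i), eps n j

lemma eps_apply (n : ℕ) (j t : Fin n) : eps n j t = if t = j then 1 else 0 :=
  Pi.single_apply j 1 t

lemma ip_eps_right {n : ℕ} (v : Fin n → ℝ) (j : Fin n) : ip v (eps n j) = v j := by
  simp [ip, eps_apply]

lemma ip_eps_sub_right {n : ℕ} (v : Fin n → ℝ) (a b : Fin n) :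
    ip v (eps n a - eps n b) = v a - v b := by
  simp only [ip, Pi.sub_apply, mul_sub, Finset.sum_sub_distrib]
  exact congrArg₂ _ (ip_eps_right v a) (ip_eps_right v b)

lemma pairing_eps_sub {n : ℕ} (v : Fin n → ℝ) {a b : Fin n} (hab : a ≠ b) :
    pairing v (eps n a - eps n b) = v a - v b := by
  rw [pairing, ip_eps_sub_right, ip_eps_sub_right]
  simp only [Pi.sub_apply, eps_apply, ↓reduceIte, hab, hab.symm]
  ring

lemma wrefl_eps_sub {n : ℕ} (v : Fin n → ℝ) {a b : Fin n} (hab : a ≠ b) :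
    wrefl (eps n a - eps n b) v = v - (v a - v b) • (eps n a - eps n b) := by
  rw [wrefl, pairing_eps_sub v hab]

theorem pairing_eq_and_wrefl_wrefl_eps_sub {n : ℕ} (v : Fin n → ℝ) {a b c : Fin n}
    (hab : a ≠ b) (hbc : b ≠ c) (hac : a ≠ c) (hvab : v a - v b = 1) (hvbc : v b - v c = 1) :
    pairing v (eps n a - eps n b) = 1 ∧
    pairing (wrefl (eps n a - eps n b) v) (eps n b - eps n c) = 2 ∧
    wrefl (eps n b - eps n c) (wrefl (eps n a - eps n b) v) =
      v - eps n a - eps n b + (2 : ℝ) • eps n c := by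
  have hrefl : wrefl (eps n a - eps n b) v = v - (eps n a - eps n b) := by
    rw [wrefl_eps_sub v hab, hvab, one_smul]
  have hgap : (v - (eps n a - eps n b)) b - (v - (eps n a - eps n b)) c = 2 := by
    simp only [Pi.sub_apply, eps_apply, ↓reduceIte, hab.symm, hac.symm, hbc.symm]
    linarith
  refine ⟨by rw [pairing_eps_sub v hab, hvab], by rw [hrefl, pairing_eps_sub _ hbc, hgap], ?_⟩
  rw [hrefl, wrefl_eps_sub _ hbc, hgap]
  module

lemma lamC_apply (n i : ℕ) (t : Fin n) : lamC n i t = if (t : ℕ) < i then 1 else 0 := by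
  simp [lamC, eps_apply, Finset.sum_apply, Finset.mem_filter]

lemma rhoC_sub_smul_lamC_apply (n i : ℕ) (t : Fin n) :
    (rhoC n - ((n : ℝ) - i + 1) • lamC n i) t = if (t : ℕ) < i then (i : ℝ) - 1 - t else n - t := by
  rw [Pi.sub_apply, Pi.smul_apply, lamC_apply, rhoC]
  split_ifs
  · rw [smul_eq_mul, mul_one]; ring
  · rw [smul_eq_mul, mul_zero, sub_zero]

/-- In type `C_n`, `2 ≤ i ≤ n-1`, with `s = n-i+1`, the sequence `(ε_{i-1}-ε_i, ε_i-ε_n)` links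
`-2ε_n - sλ_i + ρ` to `(-ε_{i-1}-ε_i) - sλ_i + ρ`. -/
theorem stmt12 (n i : ℕ) (h2 : 2 ≤ i) (hi : i ≤ n - 1) :
    (∃ m : ℕ, pairing
        (-((2 : ℝ) • eps n ⟨n - 1, by omega⟩) - ((n : ℝ) - i + 1) • lamC n i + rhoC n)
        (eps n ⟨i - 2, by omega⟩ - eps n ⟨i - 1, by omega⟩) = (m : ℝ)) ∧
    (∃ m : ℕ, pairing
        (wrefl (eps n ⟨i - 2, by omega⟩ - eps n ⟨i - 1, by omega⟩)
          (-((2 : ℝ) • eps n ⟨n - 1, by omega⟩) - ((n : ℝ) - i + 1) • lamC n i + rhoC n))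
        (eps n ⟨i - 1, by omega⟩ - eps n ⟨n - 1, by omega⟩) = (m : ℝ)) ∧
    wrefl (eps n ⟨i - 1, by omega⟩ - eps n ⟨n - 1, by omega⟩)
        (wrefl (eps n ⟨i - 2, by omega⟩ - eps n ⟨i - 1, by omega⟩)
          (-((2 : ℝ) • eps n ⟨n - 1, by omega⟩) - ((n : ℝ) - i + 1) • lamC n i + rhoC n)) =
      (-eps n ⟨i - 2, by omega⟩ - eps n ⟨i - 1, by omega⟩)
        - ((n : ℝ) - i + 1) • lamC n i + rhoC n := by
  set δ := -((2 : ℝ) • eps n ⟨n - 1, by omega⟩) - ((n : ℝ) - i + 1) • lamC n i + rhoC n with hδ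
  have hδ_apply (t : Fin n) :
      δ t = (rhoC n - ((n : ℝ) - i + 1) • lamC n i) t - 2 * eps n ⟨n - 1, by omega⟩ t := by
    simp only [hδ, Pi.add_apply, Pi.sub_apply, Pi.neg_apply, Pi.smul_apply, smul_eq_mul]
    ring
  obtain ⟨h₁, h₂, h₃⟩ := pairing_eq_and_wrefl_wrefl_eps_sub δ
    (a := ⟨i - 2, by omega⟩) (b := ⟨i - 1, by omega⟩) (c := ⟨n - 1, by omega⟩)
    (by simp; omega) (by simp; omega) (by simp; omega)
    (by simp (disch := omega) only [hδ_apply, rhoC_sub_smul_lamC_apply, eps_apply, Fin.mk.injEq,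
          if_pos, if_neg, Nat.cast_sub, Nat.cast_one, Nat.cast_ofNat]
        ring)
    (by simp (disch := omega) only [hδ_apply, rhoC_sub_smul_lamC_apply, eps_apply, Fin.mk.injEq,
          if_pos, if_neg, if_true, Nat.cast_sub, Nat.cast_one]
        ring)
  refine ⟨⟨1, by rw [h₁, Nat.cast_one]⟩, ⟨2, by rw [h₂, Nat.cast_ofNat]⟩, ?_⟩
  rw [h₃, hδ]
  module
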